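/- arXiv:1503.06525 — 5 statements merged into one kernel-verified Lean document; each statement's English description precedes it below -/
import Mathlib

section
/- Let β₀ ∈ (0,1). There exist positive constants C₁ and C₂ depending only on β₀ such that for all x > 0 and all t > 0: (1/(1+x^{1-β₀})) · ∫₀ᵗ s^{-β₀} e^{-s} ds ≤ ∫₀ᵗ s^{-β₀} e^{-sx} ds ≤ (1/(1+x^{1-β₀})) · (C₁ + C₂ t^{1-β₀}). -/
open MeasureTheory Real Set

private lemma aux_integrable (β₀ : ℝ) (hβ : β₀ ∈ Set.Ioo (0:ℝ) 1) (c T : ℝ) (hc : 0 ≤ c) :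
    IntegrableOn (fun s : ℝ => s ^ (-β₀) * Real.exp (-(s * c))) (Ioc (0:ℝ) T) := by
  rcases le_or_gt T 0 with h | h
  · rw [Set.Ioc_eq_empty (by intro hlt; exact absurd h (not_le.mpr hlt))]
    exact integrableOn_empty
  have h1 : IntegrableOn (fun s : ℝ => s ^ (-β₀)) (Ioc (0:ℝ) T) := by
    have := intervalIntegral.intervalIntegrable_rpow' (a := 0) (b := T) (r := -β₀)
      (by linarith [hβ.2])
    exact (intervalIntegrable_iff_integrableOn_Ioc_of_le h.le).mp this
  refine h1.integrable.mono ?_ ?_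
  · exact h1.aestronglyMeasurable.mul
      (Continuous.aestronglyMeasurable (by continuity))
  · filter_upwards [ae_restrict_mem measurableSet_Ioc] with s hs
    have hs0 : 0 < s := hs.1
    rw [norm_mul, Real.norm_eq_abs, Real.norm_eq_abs]
    have h2 : Real.exp (-(s * c)) ≤ 1 := Real.exp_le_one_iff.mpr (by nlinarith)
    have h3 : 0 < Real.exp (-(s * c)) := Real.exp_pos _
    rw [abs_of_pos (Real.rpow_pos_of_pos hs0 _), abs_of_pos h3]
    nlinarith [Real.rpow_pos_of_pos hs0 (-β₀)]

private lemma aux_subst (β₀ : ℝ) (hβ : β₀ ∈ Set.Ioo (0:ℝ) 1) (x t : ℝ) (hx : 0 < x)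
    (ht : 0 ≤ t) :
    ∫ s in Ioc (0:ℝ) t, s ^ (-β₀) * Real.exp (-(s * x))
      = x ^ (β₀ - 1) * ∫ u in Ioc (0:ℝ) (t * x), u ^ (-β₀) * Real.exp (-u) := by
  have htx : 0 ≤ t * x := by positivity
  rw [← intervalIntegral.integral_of_le ht, ← intervalIntegral.integral_of_le htx]
  have key : ∀ s ∈ Set.uIcc (0:ℝ) t,
      s ^ (-β₀) * Real.exp (-(s * x))
        = x ^ β₀ * ((fun u : ℝ => u ^ (-β₀) * Real.exp (-u)) (s * x)) := by
    intro s hs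
    rw [Set.uIcc_of_le ht] at hs
    rcases eq_or_lt_of_le hs.1 with h0 | h0
    · rw [← h0]
      simp [Real.zero_rpow (by intro h; simp at h; linarith [hβ.1] : -β₀ ≠ 0)]
    · simp only
      rw [Real.mul_rpow h0.le hx.le]
      rw [show x ^ β₀ * (s ^ (-β₀) * x ^ (-β₀) * Real.exp (-(s * x)))
          = (x ^ β₀ * x ^ (-β₀)) * (s ^ (-β₀) * Real.exp (-(s * x))) by ring,
        ← Real.rpow_add hx]
      simp
  rw [intervalIntegral.integral_congr key, intervalIntegral.integral_const_mul,
    intervalIntegral.integral_comp_mul_right (fun u : ℝ => u ^ (-β₀) * Real.exp (-u)) hx.ne',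
    zero_mul, smul_eq_mul, ← mul_assoc]
  congr 1
  rw [Real.rpow_sub hx, Real.rpow_one]
  field_simp

theorem stmt0 (β₀ : ℝ) (hβ : β₀ ∈ Set.Ioo (0:ℝ) 1) :
    ∃ C₁ C₂ : ℝ, 0 < C₁ ∧ 0 < C₂ ∧ ∀ x > (0:ℝ), ∀ t > (0:ℝ),
      (1 / (1 + x ^ (1 - β₀))) * (∫ s in Set.Ioc (0:ℝ) t, s ^ (-β₀) * Real.exp (-s))
        ≤ (∫ s in Set.Ioc (0:ℝ) t, s ^ (-β₀) * Real.exp (-(s * x))) ∧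
      (∫ s in Set.Ioc (0:ℝ) t, s ^ (-β₀) * Real.exp (-(s * x)))
        ≤ (1 / (1 + x ^ (1 - β₀))) * (C₁ + C₂ * t ^ (1 - β₀)) := by
  obtain ⟨hβ0, hβ1⟩ := hβ
  have h1β : (0:ℝ) < 1 - β₀ := by linarith
  have hΓ : 0 < Real.Gamma (1 - β₀) := Real.Gamma_pos_of_pos h1β
  refine ⟨2 * Real.Gamma (1 - β₀), 2 / (1 - β₀), by positivity, by positivity, ?_⟩
  intro x hx t ht
  set J := ∫ s in Set.Ioc (0:ℝ) t, s ^ (-β₀) * Real.exp (-s) with hJdef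
  have hg : ∀ T : ℝ, (∫ s in Set.Ioc (0:ℝ) T, s ^ (-β₀) * Real.exp (-s))
      = ∫ s in Set.Ioc (0:ℝ) T, s ^ (-β₀) * Real.exp (-(s * 1)) := by
    intro T; simp
  have hJ0 : 0 ≤ J := setIntegral_nonneg measurableSet_Ioc fun s hs => by
    have := hs.1; positivity
  have hxp : 0 < x ^ (1 - β₀) := Real.rpow_pos_of_pos hx _
  have hden : 0 < 1 + x ^ (1 - β₀) := by linarith
  -- substitution identity
  have hsub := aux_subst β₀ ⟨hβ0, hβ1⟩ x t hx ht.le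
  -- the gamma upper bound for the g-integral
  have hgint : IntegrableOn (fun u : ℝ => Real.exp (-u) * u ^ ((1 - β₀) - 1)) (Ioi (0:ℝ)) :=
    Real.GammaIntegral_convergent h1β
  have hgeq : (fun u : ℝ => u ^ (-β₀) * Real.exp (-u))
      = fun u : ℝ => Real.exp (-u) * u ^ ((1 - β₀) - 1) := by
    funext u; rw [mul_comm]; norm_num
  have hΓle : ∀ T : ℝ, (∫ u in Ioc (0:ℝ) T, u ^ (-β₀) * Real.exp (-u)) ≤ Real.Gamma (1 - β₀) := by
    intro T
    rw [Real.Gamma_eq_integral h1β, hgeq]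
    refine setIntegral_mono_set (hgint) ?_ (HasSubset.Subset.eventuallyLE Ioc_subset_Ioi_self)
    filter_upwards [ae_restrict_mem measurableSet_Ioi] with u hu
    have : (0:ℝ) < u := hu
    positivity
  have hxβ1 : x ^ (β₀ - 1) = (x ^ (1 - β₀))⁻¹ := by
    rw [show β₀ - 1 = -(1 - β₀) by ring, Real.rpow_neg hx.le]
  constructor
  · -- lower bound
    rcases le_total x 1 with hx1 | hx1
    · have hJI : J ≤ ∫ s in Set.Ioc (0:ℝ) t, s ^ (-β₀) * Real.exp (-(s * x)) := by
        rw [hJdef, hg t]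
        refine setIntegral_mono_on (aux_integrable β₀ ⟨hβ0, hβ1⟩ 1 t zero_le_one).integrable
          (aux_integrable β₀ ⟨hβ0, hβ1⟩ x t hx.le).integrable measurableSet_Ioc ?_
        intro s hs
        have hs0 : 0 < s := hs.1
        have : Real.exp (-(s * x)) ≥ Real.exp (-(s * 1)) := by
          apply Real.exp_le_exp.mpr; nlinarith
        nlinarith [Real.rpow_pos_of_pos hs0 (-β₀)]
      calc (1 / (1 + x ^ (1 - β₀))) * J ≤ 1 * J := by
            apply mul_le_mul_of_nonneg_right _ hJ0
            rw [div_le_one hden]; linarith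
        _ = J := one_mul J
        _ ≤ _ := hJI
    · -- x ≥ 1
      have hmono : J ≤ ∫ u in Ioc (0:ℝ) (t * x), u ^ (-β₀) * Real.exp (-u) := by
        rw [hJdef, hg t, hg (t * x)]
        refine setIntegral_mono_set (aux_integrable β₀ ⟨hβ0, hβ1⟩ 1 (t * x) zero_le_one) ?_ ?_
        · filter_upwards [ae_restrict_mem measurableSet_Ioc] with s hs
          have : (0:ℝ) < s := hs.1
          positivity
        · apply HasSubset.Subset.eventuallyLE
          apply Ioc_subset_Ioc_right
          nlinarith
      rw [hsub]
      have h1 : (1 / (1 + x ^ (1 - β₀))) ≤ x ^ (β₀ - 1) := by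
        rw [hxβ1, one_div]
        exact inv_anti₀ hxp (by linarith)
      have hxb : 0 < x ^ (β₀ - 1) := Real.rpow_pos_of_pos hx _
      calc (1 / (1 + x ^ (1 - β₀))) * J ≤ x ^ (β₀ - 1) * J :=
            mul_le_mul_of_nonneg_right h1 hJ0
        _ ≤ _ := mul_le_mul_of_nonneg_left hmono hxb.le
  · -- upper bound
    rcases le_total x 1 with hx1 | hx1
    · -- use I ≤ t^(1-β₀)/(1-β₀)
      have hIb : (∫ s in Set.Ioc (0:ℝ) t, s ^ (-β₀) * Real.exp (-(s * x)))
          ≤ t ^ (1 - β₀) / (1 - β₀) := by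
        have hIr : (∫ s in Set.Ioc (0:ℝ) t, s ^ (-β₀) * Real.exp (-(s * x)))
            ≤ ∫ s in Set.Ioc (0:ℝ) t, s ^ (-β₀) := by
          have hri : IntegrableOn (fun s : ℝ => s ^ (-β₀)) (Ioc (0:ℝ) t) := by
            have := intervalIntegral.intervalIntegrable_rpow' (a := 0) (b := t) (r := -β₀)
              (by linarith)
            exact (intervalIntegrable_iff_integrableOn_Ioc_of_le ht.le).mp this
          refine setIntegral_mono_on (aux_integrable β₀ ⟨hβ0, hβ1⟩ x t hx.le).integrable
            hri.integrable measurableSet_Ioc ?_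
          intro s hs
          have hs0 : 0 < s := hs.1
          have h2 : Real.exp (-(s * x)) ≤ 1 := Real.exp_le_one_iff.mpr (by nlinarith)
          nlinarith [Real.rpow_pos_of_pos hs0 (-β₀), Real.exp_pos (-(s * x))]
        have hreq : (∫ s in Set.Ioc (0:ℝ) t, s ^ (-β₀)) = t ^ (1 - β₀) / (1 - β₀) := by
          rw [← intervalIntegral.integral_of_le ht.le,
            integral_rpow (Or.inl (by linarith : (-1:ℝ) < -β₀))]
          rw [Real.zero_rpow (by intro h; linarith [h] : -β₀ + 1 ≠ 0),
            show -β₀ + 1 = 1 - β₀ by ring]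
          norm_num
        linarith
      have hx1b : x ^ (1 - β₀) ≤ 1 := Real.rpow_le_one hx.le hx1 h1β.le
      have htp : 0 < t ^ (1 - β₀) := Real.rpow_pos_of_pos ht _
      have h2 : 1 + x ^ (1 - β₀) ≤ 2 := by linarith
      have hhalf : (1:ℝ) / 2 ≤ 1 / (1 + x ^ (1 - β₀)) := one_div_le_one_div_of_le hden h2
      have hB : (0:ℝ) ≤ 2 * Real.Gamma (1 - β₀) + 2 / (1 - β₀) * t ^ (1 - β₀) := by positivity
      have hRHS : t ^ (1 - β₀) / (1 - β₀)
          ≤ (1 / (1 + x ^ (1 - β₀))) * (2 * Real.Gamma (1 - β₀) + 2 / (1 - β₀) * t ^ (1 - β₀)) :=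
        calc t ^ (1 - β₀) / (1 - β₀)
            = (1 / 2) * (2 / (1 - β₀) * t ^ (1 - β₀)) := by ring
          _ ≤ (1 / 2) * (2 * Real.Gamma (1 - β₀) + 2 / (1 - β₀) * t ^ (1 - β₀)) := by
              apply mul_le_mul_of_nonneg_left (by linarith) (by norm_num)
          _ ≤ _ := mul_le_mul_of_nonneg_right hhalf hB
      linarith
    · -- x ≥ 1 : use I ≤ Γ x^(β₀-1)
      have hIb : (∫ s in Set.Ioc (0:ℝ) t, s ^ (-β₀) * Real.exp (-(s * x)))
          ≤ x ^ (β₀ - 1) * Real.Gamma (1 - β₀) := by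
        rw [hsub]
        exact mul_le_mul_of_nonneg_left (hΓle (t * x)) (Real.rpow_pos_of_pos hx _).le
      have hx1b : 1 ≤ x ^ (1 - β₀) := Real.one_le_rpow hx1 h1β.le
      have htp : 0 < t ^ (1 - β₀) := Real.rpow_pos_of_pos ht _
      have h1βt : 0 ≤ 2 / (1 - β₀) * t ^ (1 - β₀) := by positivity
      have key : x ^ (β₀ - 1) * Real.Gamma (1 - β₀)
          ≤ (1 / (1 + x ^ (1 - β₀))) * (2 * Real.Gamma (1 - β₀)) := by
        rw [hxβ1, inv_eq_one_div, div_mul_eq_mul_div, one_mul, div_mul_eq_mul_div, one_mul,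
          div_le_div_iff₀ hxp hden]
        nlinarith
      have hmono2 : (1 / (1 + x ^ (1 - β₀))) * (2 * Real.Gamma (1 - β₀))
          ≤ (1 / (1 + x ^ (1 - β₀))) * (2 * Real.Gamma (1 - β₀) + 2 / (1 - β₀) * t ^ (1 - β₀)) := by
        apply mul_le_mul_of_nonneg_left _ (by positivity)
        linarith
      linarith
end

section
/- Let β₀ ∈ (0,1). There exist positive constants D₁ and D₂ depending only on β₀ such that for all x > 0 and all t > 0: (2/(1+x^{1-β₀})) · ∫₀ᵗ∫₀ˢ r^{-β₀} e^{-r} dr ds ≤ ∫₀ᵗ∫₀ᵗ |r-s|^{-β₀} e^{-|r-s| x} dr ds ≤ (2/(1+x^{1-β₀})) · (D₁ t + D₂ t^{2-β₀}). -/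
/-!
Splitting the inner integral at `s = r` gives
`∫₀ᵗ |r - s|^(-β) e^(-x|r - s|) ds = F_x(r) + F_x(t - r)` with `F_x(r) = ∫₀ʳ u^(-β) e^(-xu) du`,
so by the symmetry `r ↦ t - r` the double integral is `2 ∫₀ᵗ F_x`. The substitution `v = xu`
gives `F_x(r) = x^(β-1) F_1(rx)`. For `x ≤ 1`, `F_x` lies between `F_1` and
`F_0(r) = r^(1-β)/(1-β)`; for `x ≥ 1` the scaling and `F_1(r) ≤ F_1(rx) ≤ Γ(1-β)` apply. In both
regimes `min(1, x^(β-1))` is within a factor `2` of `1/(1 + x^(1-β))`.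
-/

open MeasureTheory Real Set

section AbsSub

variable {E : Type*} [NormedAddCommGroup E] [NormedSpace ℝ E] {f : ℝ → E}

theorem intervalIntegral_comp_abs_sub {r t : ℝ} (hr : r ∈ Icc 0 t)
    (hf₁ : IntervalIntegrable f volume 0 r) (hf₂ : IntervalIntegrable f volume 0 (t - r)) :
    ∫ s in 0..t, f |r - s| = (∫ u in 0..r, f u) + ∫ u in 0..t - r, f u := by
  have h₁ : EqOn (fun s => f |r - s|) (fun s => f (r - s)) (uIcc 0 r) := fun s hs => by
    rw [uIcc_of_le hr.1] at hs
    simp only [abs_of_nonneg (sub_nonneg.2 hs.2)]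
  have h₂ : EqOn (fun s => f |r - s|) (fun s => f (s - r)) (uIcc r t) := fun s hs => by
    rw [uIcc_of_le hr.2] at hs
    simp only [abs_sub_comm r s, abs_of_nonneg (sub_nonneg.2 hs.1)]
  have i₁ : IntervalIntegrable (fun s => f |r - s|) volume 0 r := by
    refine (intervalIntegrable_congr (h₁.symm.mono uIoc_subset_uIcc)).1 ?_
    simpa using (hf₁.comp_sub_left r).symm
  have i₂ : IntervalIntegrable (fun s => f |r - s|) volume r t := by
    refine (intervalIntegrable_congr (h₂.symm.mono uIoc_subset_uIcc)).1 ?_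
    simpa using hf₂.comp_sub_right r
  rw [← intervalIntegral.integral_add_adjacent_intervals i₁ i₂, intervalIntegral.integral_congr h₁,
    intervalIntegral.integral_congr h₂, intervalIntegral.integral_comp_sub_left,
    intervalIntegral.integral_comp_sub_right]
  simp

theorem setIntegral_Ioc_setIntegral_Ioc_comp_abs_sub {t : ℝ} (hf : IntegrableOn f (Ioc 0 t)) :
    ∫ r in Ioc 0 t, ∫ s in Ioc 0 t, f |r - s| = (2 : ℝ) • ∫ r in Ioc 0 t, ∫ u in Ioc 0 r, f u := by
  rcases le_or_gt t 0 with ht | ht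
  · simp [Ioc_eq_empty_of_le ht]
  set Φ : ℝ → E := fun r => ∫ u in 0..r, f u
  have hfi : IntervalIntegrable f volume 0 t :=
    (intervalIntegrable_iff_integrableOn_Ioc_of_le ht.le).2 hf
  have hΦ : IntervalIntegrable Φ volume 0 t :=
    (intervalIntegral.continuousOn_primitive_interval' hfi left_mem_uIcc).intervalIntegrable
  have hΦrev : IntervalIntegrable (fun r => Φ (t - r)) volume 0 t := by
    simpa using (hΦ.comp_sub_left t).symm
  calc ∫ r in Ioc 0 t, ∫ s in Ioc 0 t, f |r - s| = ∫ r in 0..t, (Φ r + Φ (t - r)) := by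
        rw [intervalIntegral.integral_of_le ht.le]
        refine setIntegral_congr_fun measurableSet_Ioc fun r hr => ?_
        rw [← intervalIntegral.integral_of_le ht.le]
        exact intervalIntegral_comp_abs_sub ⟨hr.1.le, hr.2⟩
          (hfi.mono_set (uIcc_subset_uIcc_left (mem_uIcc_of_le hr.1.le hr.2)))
          (hfi.mono_set (uIcc_subset_uIcc_left
            (mem_uIcc_of_le (sub_nonneg.2 hr.2) (sub_le_self t hr.1.le))))
    _ = (2 : ℝ) • ∫ r in 0..t, Φ r := by
        rw [intervalIntegral.integral_add hΦ hΦrev, intervalIntegral.integral_comp_sub_left Φ t,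
          sub_self, sub_zero, two_smul]
    _ = _ := by
        rw [intervalIntegral.integral_of_le ht.le]
        congr 1
        exact setIntegral_congr_fun measurableSet_Ioc fun r hr =>
          intervalIntegral.integral_of_le hr.1.le

end AbsSub

noncomputable def truncLaplaceRpow (β x r : ℝ) : ℝ :=
  ∫ u in Ioc 0 r, u ^ (-β) * exp (-(u * x))

namespace truncLaplaceRpow

variable {β x r : ℝ}

theorem integrableOn_integrand (hβ : β < 1) (x r : ℝ) :
    IntegrableOn (fun u : ℝ => u ^ (-β) * exp (-(u * x))) (Ioc 0 r) := by
  have h : IntervalIntegrable (fun u : ℝ => u ^ (-β) * exp (-(u * x))) volume 0 r :=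
    (intervalIntegral.intervalIntegrable_rpow' (by linarith)).mul_continuousOn (by fun_prop)
  exact (intervalIntegrable_iff.1 h).mono_set Ioc_subset_uIoc

theorem integrand_nonneg (x : ℝ) {u : ℝ} (hu : 0 ≤ u) : 0 ≤ u ^ (-β) * exp (-(u * x)) :=
  mul_nonneg (rpow_nonneg hu _) (exp_pos _).le

theorem nonneg (β x r : ℝ) : 0 ≤ truncLaplaceRpow β x r :=
  setIntegral_nonneg measurableSet_Ioc fun _ hu => integrand_nonneg x hu.1.le

theorem mono (hβ : β < 1) (x : ℝ) : Monotone (truncLaplaceRpow β x) := fun _ r₂ h =>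
  setIntegral_mono_set (integrableOn_integrand hβ x r₂)
    (ae_restrict_of_forall_mem measurableSet_Ioc fun _ hu => integrand_nonneg x hu.1.le)
    (Ioc_subset_Ioc_right h).eventuallyLE

theorem integrableOn (hβ : β < 1) (x t : ℝ) : IntegrableOn (truncLaplaceRpow β x) (Ioc 0 t) :=
  (intervalIntegrable_iff.1 (mono hβ x).intervalIntegrable).mono_set Ioc_subset_uIoc

theorem antitone_param (hβ : β < 1) (r : ℝ) : Antitone fun x => truncLaplaceRpow β x r :=
  fun x₁ x₂ h => setIntegral_mono_on (integrableOn_integrand hβ x₂ r)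
    (integrableOn_integrand hβ x₁ r) measurableSet_Ioc fun _ hu =>
      mul_le_mul_of_nonneg_left (exp_le_exp.2 (neg_le_neg (mul_le_mul_of_nonneg_left h hu.1.le)))
        (rpow_nonneg hu.1.le _)

theorem param_zero (hβ : β < 1) (hr : 0 ≤ r) :
    truncLaplaceRpow β 0 r = r ^ (1 - β) / (1 - β) := by
  simp only [truncLaplaceRpow, mul_zero, neg_zero, exp_zero, mul_one]
  rw [← intervalIntegral.integral_of_le hr, integral_rpow (Or.inl (by linarith)),
    zero_rpow (by linarith), sub_zero, neg_add_eq_sub]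

theorem eq_param_one_div (hx : 0 < x) (hr : 0 ≤ r) :
    truncLaplaceRpow β x r = truncLaplaceRpow β 1 (r * x) / x ^ (1 - β) := by
  have hrx : 0 ≤ r * x := mul_nonneg hr hx.le
  simp only [truncLaplaceRpow, mul_one]
  rw [← intervalIntegral.integral_of_le hr, ← intervalIntegral.integral_of_le hrx]
  have hsubst : ∀ u ∈ uIcc 0 r, u ^ (-β) * exp (-(u * x))
      = x ^ β * ((fun v : ℝ => v ^ (-β) * exp (-v)) (u * x)) := by
    intro u hu
    rw [uIcc_of_le hr] at hu
    beta_reduce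
    rw [mul_rpow hu.1 hx.le, rpow_neg hx.le]
    field_simp [(rpow_pos_of_pos hx β).ne']
  rw [intervalIntegral.integral_congr hsubst, intervalIntegral.integral_const_mul,
    intervalIntegral.integral_comp_mul_right (fun v : ℝ => v ^ (-β) * exp (-v)) hx.ne', zero_mul,
    smul_eq_mul, ← mul_assoc, div_eq_inv_mul, ← rpow_neg_one, ← rpow_add hx, ← rpow_neg hx.le]
  ring_nf

theorem param_one_le_Gamma (hβ : β < 1) (r : ℝ) :
    truncLaplaceRpow β 1 r ≤ Gamma (1 - β) := by
  have hΓ : Gamma (1 - β) = ∫ u in Ioi 0, u ^ (-β) * exp (-u) := by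
    rw [Gamma_eq_integral (by linarith)]
    refine setIntegral_congr_fun measurableSet_Ioi fun u _ => ?_
    rw [mul_comm, sub_sub_cancel_left]
  have hint : IntegrableOn (fun u : ℝ => u ^ (-β) * exp (-u)) (Ioi 0) :=
    (GammaIntegral_convergent (s := 1 - β) (by linarith)).congr_fun
      (fun u _ => by rw [mul_comm, sub_sub_cancel_left]) measurableSet_Ioi
  simp only [truncLaplaceRpow, mul_one]
  rw [hΓ]
  exact setIntegral_mono_set hint
    (ae_restrict_of_forall_mem measurableSet_Ioi fun _ hu => by
      simpa using integrand_nonneg (β := β) 1 (le_of_lt hu))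
    Ioc_subset_Ioi_self.eventuallyLE

theorem param_one_div_le (hβ : β < 1) (hx : 0 < x) (hr : 0 ≤ r) :
    truncLaplaceRpow β 1 r / (1 + x ^ (1 - β)) ≤ truncLaplaceRpow β x r := by
  have hX : 0 < x ^ (1 - β) := rpow_pos_of_pos hx _
  have hF := nonneg β 1 r
  rcases le_total x 1 with hx1 | hx1
  · calc truncLaplaceRpow β 1 r / (1 + x ^ (1 - β)) ≤ truncLaplaceRpow β 1 r :=
          div_le_self hF (by linarith)
      _ ≤ truncLaplaceRpow β x r := antitone_param hβ r hx1
  · calc truncLaplaceRpow β 1 r / (1 + x ^ (1 - β)) ≤ truncLaplaceRpow β 1 r / x ^ (1 - β) :=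
          div_le_div_of_nonneg_left hF hX (by linarith)
      _ ≤ truncLaplaceRpow β 1 (r * x) / x ^ (1 - β) :=
          div_le_div_of_nonneg_right (mono hβ 1 (le_mul_of_one_le_right hr hx1)) hX.le
      _ = truncLaplaceRpow β x r := (eq_param_one_div hx hr).symm

theorem le_two_div_mul (hβ : β < 1) (hx : 0 < x) (hr : 0 ≤ r) :
    truncLaplaceRpow β x r ≤
      2 / (1 + x ^ (1 - β)) * (Gamma (1 - β) + r ^ (1 - β) / (1 - β)) := by
  have hX : 0 < x ^ (1 - β) := rpow_pos_of_pos hx _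
  have hΓ : 0 < Gamma (1 - β) := Gamma_pos_of_pos (by linarith)
  have hψ : 0 ≤ r ^ (1 - β) / (1 - β) := div_nonneg (rpow_nonneg hr _) (by linarith)
  rcases le_total x 1 with hx1 | hx1
  · have hX1 : x ^ (1 - β) ≤ 1 := rpow_le_one hx.le hx1 (by linarith)
    have h2 : 1 ≤ 2 / (1 + x ^ (1 - β)) := by rw [le_div_iff₀ (by positivity)]; linarith
    calc truncLaplaceRpow β x r ≤ truncLaplaceRpow β 0 r := antitone_param hβ r hx.le
      _ = r ^ (1 - β) / (1 - β) := param_zero hβ hr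
      _ ≤ 2 / (1 + x ^ (1 - β)) * (Gamma (1 - β) + r ^ (1 - β) / (1 - β)) := by nlinarith
  · have hX1 : 1 ≤ x ^ (1 - β) := one_le_rpow hx1 (by linarith)
    have h2 : 1 / x ^ (1 - β) ≤ 2 / (1 + x ^ (1 - β)) := by
      rw [div_le_div_iff₀ hX (by positivity)]; linarith
    calc truncLaplaceRpow β x r = truncLaplaceRpow β 1 (r * x) / x ^ (1 - β) :=
          eq_param_one_div hx hr
      _ ≤ Gamma (1 - β) / x ^ (1 - β) :=
          div_le_div_of_nonneg_right (param_one_le_Gamma hβ _) hX.le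
      _ ≤ 2 / (1 + x ^ (1 - β)) * (Gamma (1 - β) + r ^ (1 - β) / (1 - β)) := by
          rw [div_eq_mul_one_div, mul_comm]
          gcongr
          linarith

theorem setIntegral_Ioc_setIntegral_Ioc_abs_sub (hβ : β < 1) (x t : ℝ) :
    ∫ r in Ioc 0 t, ∫ s in Ioc 0 t, |r - s| ^ (-β) * exp (-(|r - s| * x)) =
      2 * ∫ r in Ioc 0 t, truncLaplaceRpow β x r :=
  setIntegral_Ioc_setIntegral_Ioc_comp_abs_sub (integrableOn_integrand hβ x t)

theorem setIntegral_param_one_div_le (hβ : β < 1) (hx : 0 < x) (t : ℝ) :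
    (∫ r in Ioc 0 t, truncLaplaceRpow β 1 r) / (1 + x ^ (1 - β)) ≤
      ∫ r in Ioc 0 t, truncLaplaceRpow β x r := by
  rw [← integral_div]
  exact setIntegral_mono_on ((integrableOn hβ 1 t).div_const _) (integrableOn hβ x t)
    measurableSet_Ioc fun r hr => param_one_div_le hβ hx hr.1.le

theorem setIntegral_le_two_div_mul (hβ : β < 1) (hx : 0 < x) {t : ℝ} (ht : 0 ≤ t) :
    ∫ r in Ioc 0 t, truncLaplaceRpow β x r ≤
      2 / (1 + x ^ (1 - β)) * (Gamma (1 - β) * t + t ^ (2 - β) / (1 - β)) := by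
  have hbound : ∀ r ∈ Ioc 0 t, truncLaplaceRpow β x r ≤
      2 / (1 + x ^ (1 - β)) * (Gamma (1 - β) + t ^ (1 - β) / (1 - β)) :=
    fun r hr => (mono hβ x hr.2).trans (le_two_div_mul hβ hx ht)
  calc ∫ r in Ioc 0 t, truncLaplaceRpow β x r
      ≤ t * (2 / (1 + x ^ (1 - β)) * (Gamma (1 - β) + t ^ (1 - β) / (1 - β))) := by
        simpa [volume_real_Ioc_of_le ht] using setIntegral_mono_on (integrableOn hβ x t)
          (integrableOn_const measure_Ioc_lt_top.ne) measurableSet_Ioc hbound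
    _ = 2 / (1 + x ^ (1 - β)) * (Gamma (1 - β) * t + t ^ (2 - β) / (1 - β)) := by
        rw [show 2 - β = 1 + (1 - β) by ring, rpow_add' ht (by linarith), rpow_one]
        ring

end truncLaplaceRpow

theorem stmt1 (β₀ : ℝ) (hβ : β₀ ∈ Set.Ioo (0:ℝ) 1) :
    ∃ D₁ D₂ : ℝ, 0 < D₁ ∧ 0 < D₂ ∧ ∀ x > (0:ℝ), ∀ t > (0:ℝ),
      (2 / (1 + x ^ (1 - β₀))) *
          (∫ s in Set.Ioc (0:ℝ) t, ∫ r in Set.Ioc (0:ℝ) s, r ^ (-β₀) * Real.exp (-r))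
        ≤ (∫ r in Set.Ioc (0:ℝ) t, ∫ s in Set.Ioc (0:ℝ) t,
            |r - s| ^ (-β₀) * Real.exp (-(|r - s| * x))) ∧
      (∫ r in Set.Ioc (0:ℝ) t, ∫ s in Set.Ioc (0:ℝ) t,
            |r - s| ^ (-β₀) * Real.exp (-(|r - s| * x)))
        ≤ (2 / (1 + x ^ (1 - β₀))) * (D₁ * t + D₂ * t ^ (2 - β₀)) := by
  have hβ₁ : β₀ < 1 := hβ.2
  refine ⟨2 * Gamma (1 - β₀), 2 / (1 - β₀), mul_pos two_pos (Gamma_pos_of_pos (by linarith)),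
    div_pos two_pos (by linarith), fun x hx t ht => ?_⟩
  rw [truncLaplaceRpow.setIntegral_Ioc_setIntegral_Ioc_abs_sub hβ₁]
  constructor
  · calc _ = 2 * ((∫ r in Ioc 0 t, truncLaplaceRpow β₀ 1 r) / (1 + x ^ (1 - β₀))) := by
          simp only [truncLaplaceRpow, mul_one]
          ring
      _ ≤ _ := by
          gcongr
          exact truncLaplaceRpow.setIntegral_param_one_div_le hβ₁ hx t
  · calc 2 * ∫ r in Ioc 0 t, truncLaplaceRpow β₀ x r
        ≤ 2 * (2 / (1 + x ^ (1 - β₀)) * (Gamma (1 - β₀) * t + t ^ (2 - β₀) / (1 - β₀))) := by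
          gcongr
          exact truncLaplaceRpow.setIntegral_le_two_div_mul hβ₁ hx ht.le
      _ = 2 / (1 + x ^ (1 - β₀)) * (2 * Gamma (1 - β₀) * t + 2 / (1 - β₀) * t ^ (2 - β₀)) := by
          ring
end

section
/- Suppose α₁, …, αₙ ∈ (-1,1) and let α = α₁ + ⋯ + αₙ. Then the iterated integral of ∏ᵢ₌₁ⁿ (rᵢ - r_{i-1})^{αᵢ} over the simplex {0 < r₁ < ⋯ < rₙ < t} (with r₀ = 0) equals (∏ᵢ₌₁ⁿ Γ(αᵢ + 1)) · t^{α+n} / Γ(α + n + 1). -/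
/-!
Fubini in the first coordinate `r₁ = s`, followed by translating the remaining coordinates by `s`,
turns the integral over the simplex of size `t` into `∫₀ᵗ s^{α₁} I(t - s) ds`, where `I(u)` is the
same integral for `(α₂, …, αₙ)` over the simplex of size `u`. By induction on `n` (starting at
`n = 0`, where the simplex is a point) `I(u)` is a constant multiple of `u^γ` with
`γ = α₂ + ⋯ + αₙ + n - 1`, and the Beta integral `∫₀ᵗ s^a (t - s)^b ds = B(a+1, b+1) t^{a+b+1}`
closes the induction. The induction runs in `ℝ≥0∞`, where Tonelli needs no integrability.
-/

open MeasureTheory Real Set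
open scoped ENNReal

variable {n : ℕ}

theorem lintegral_fin_cons {X : Type*} [MeasureSpace X] [SigmaFinite (volume : Measure X)]
    (f : (Fin (n + 1) → X) → ℝ≥0∞) (hf : Measurable f) :
    ∫⁻ r, f r = ∫⁻ s, ∫⁻ y, f (Fin.cons s y) := by
  set e := MeasurableEquiv.piFinSuccAbove (fun _ => X) 0
  rw [← ((volume_preserving_piFinSuccAbove (fun _ => X) 0).symm _).lintegral_comp hf,
    Measure.volume_eq_prod,
    lintegral_prod (fun p => f (e.symm p)) (hf.comp e.symm.measurable).aemeasurable]
  simp only [e, MeasurableEquiv.piFinSuccAbove_symm_apply, Fin.insertNthEquiv_zero]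
  rfl

section Beta

variable {a b t : ℝ}

lemma intervalIntegrable_rpow_mul_sub_rpow (ha : -1 < a) (hb : -1 < b) (ht : 0 < t) :
    IntervalIntegrable (fun s => s ^ a * (t - s) ^ b) volume 0 t := by
  have hleft : IntervalIntegrable (fun s => s ^ a * (t - s) ^ b) volume 0 (t / 2) := by
    refine (intervalIntegral.intervalIntegrable_rpow' ha).mul_continuousOn
      (ContinuousOn.rpow_const (by fun_prop) fun s hs => Or.inl ?_)
    rw [uIcc_of_le (by positivity)] at hs
    exact (sub_pos.2 (by linarith [hs.2])).ne'
  have hright : IntervalIntegrable (fun s => s ^ a * (t - s) ^ b) volume (t / 2) t := by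
    have h := (intervalIntegral.intervalIntegrable_rpow' (a := t / 2) (b := 0) hb).comp_sub_left t
    rw [sub_half, sub_zero] at h
    refine h.continuousOn_mul (ContinuousOn.rpow_const (by fun_prop) fun s hs => Or.inl ?_)
    rw [uIcc_of_le (by linarith)] at hs
    exact (by linarith [hs.1] : 0 < s).ne'
  exact hleft.trans hright

lemma intervalIntegral_rpow_mul_sub_rpow (ha : -1 < a) (hb : -1 < b) (ht : 0 < t) :
    ∫ s in 0..t, s ^ a * (t - s) ^ b
      = ProbabilityTheory.beta (a + 1) (b + 1) * t ^ (a + b + 1) := by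
  calc ∫ s in 0..t, s ^ a * (t - s) ^ b
      = (∫ s in 0..t, ((s ^ a * (t - s) ^ b : ℝ) : ℂ)).re := by
        rw [intervalIntegral.integral_ofReal, Complex.ofReal_re]
    _ = (∫ s in 0..t, (s : ℂ) ^ (((a + 1 : ℝ) : ℂ) - 1)
          * ((t : ℂ) - s) ^ (((b + 1 : ℝ) : ℂ) - 1)).re := by
        congr 1
        refine intervalIntegral.integral_congr fun s hs => ?_
        rw [uIcc_of_le ht.le] at hs
        rw [Complex.ofReal_mul, Complex.ofReal_cpow hs.1, ← Complex.ofReal_sub,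
          Complex.ofReal_cpow (sub_nonneg.2 hs.2)]
        push_cast
        ring_nf
    _ = (((t ^ (a + b + 1) : ℝ) : ℂ)
          * Complex.betaIntegral ((a + 1 : ℝ) : ℂ) ((b + 1 : ℝ) : ℂ)).re := by
        rw [Complex.betaIntegral_scaled _ _ ht, Complex.ofReal_cpow ht.le]
        push_cast
        ring_nf
    _ = ProbabilityTheory.beta (a + 1) (b + 1) * t ^ (a + b + 1) := by
        rw [Complex.re_ofReal_mul, mul_comm,
          ProbabilityTheory.beta_eq_betaIntegralReal _ _ (by linarith) (by linarith)]

lemma lintegral_Ioo_rpow_mul_sub_rpow (ha : -1 < a) (hb : -1 < b) (ht : 0 < t) :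
    ∫⁻ s in Ioo 0 t, ENNReal.ofReal (s ^ a * (t - s) ^ b)
      = ENNReal.ofReal (ProbabilityTheory.beta (a + 1) (b + 1) * t ^ (a + b + 1)) := by
  rw [← intervalIntegral_rpow_mul_sub_rpow ha hb ht, intervalIntegral.integral_of_le ht.le,
    integral_Ioc_eq_integral_Ioo, ofReal_integral_eq_lintegral_ofReal
      ((intervalIntegrable_rpow_mul_sub_rpow ha hb ht).1.mono_set Ioo_subset_Ioc_self)]
  filter_upwards [ae_restrict_mem measurableSet_Ioo] with s hs
  exact mul_nonneg (rpow_nonneg hs.1.le _) (rpow_nonneg (sub_nonneg.2 hs.2.le) _)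

end Beta

lemma sum_add_card_nonneg {ι : Type*} [Fintype ι] {α : ι → ℝ} (hα : ∀ i, -1 ≤ α i) :
    0 ≤ ∑ i, α i + Fintype.card ι := by
  have h : ∑ i, α i + Fintype.card ι = ∑ i, (α i + 1) := by
    simp [Finset.sum_add_distrib]
  exact h ▸ Finset.sum_nonneg fun i _ => by linarith [hα i]

lemma prod_Gamma_add_one_pos {ι : Type*} [Fintype ι] {α : ι → ℝ} (hα : ∀ i, -1 < α i) :
    0 < ∏ i, Gamma (α i + 1) :=
  Finset.prod_pos fun i _ => Gamma_pos_of_pos (by linarith [hα i])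

noncomputable def incrementRpowProd (α : Fin n → ℝ) (r : Fin n → ℝ) : ℝ :=
  ∏ i : Fin n,
    (r i - (if _h : (i : ℕ) = 0 then 0
      else r ⟨(i : ℕ) - 1, Nat.lt_of_le_of_lt (Nat.sub_le _ _) i.isLt⟩)) ^ (α i)

def orderedSimplex (n : ℕ) (t : ℝ) : Set (Fin n → ℝ) :=
  {r | (∀ i, 0 < r i) ∧ (∀ i j : Fin n, i < j → r i < r j) ∧ (∀ i, r i < t)}

lemma measurableSet_orderedSimplex (n : ℕ) (t : ℝ) : MeasurableSet (orderedSimplex n t) := by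
  simp only [orderedSimplex, ofPred_and, ofPred_forall]
  measurability

lemma measurable_incrementRpowProd (α : Fin n → ℝ) : Measurable (incrementRpowProd α) :=
  Finset.measurable_prod _ fun i _ => by split_ifs <;> fun_prop

lemma incrementRpowProd_pos {α : Fin n → ℝ} {t : ℝ} {r : Fin n → ℝ}
    (hr : r ∈ orderedSimplex n t) : 0 < incrementRpowProd α r := by
  refine Finset.prod_pos fun i _ => rpow_pos_of_pos ?_ _
  split_ifs with hi
  · simpa using hr.1 i
  · exact sub_pos.2 (hr.2.1 _ _ (Fin.lt_def.2 (Nat.sub_one_lt hi)))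

lemma cons_mem_orderedSimplex_iff {t s : ℝ} {y : Fin n → ℝ} :
    Fin.cons s y ∈ orderedSimplex (n + 1) t ↔
      s ∈ Ioo 0 t ∧ (y - fun _ => s) ∈ orderedSimplex n (t - s) := by
  simp only [orderedSimplex, mem_ofPred_eq, Fin.forall_fin_succ, Fin.cons_zero, Fin.cons_succ,
    Fin.succ_pos, Fin.succ_lt_succ_iff, Fin.not_lt_zero, Pi.sub_apply, sub_pos,
    sub_lt_sub_iff_right, mem_Ioo, true_and, forall_const, false_implies]
  constructor
  · tauto
  · rintro ⟨⟨hs, hst⟩, hy, hyy, hyt⟩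
    exact ⟨⟨hs, fun i => hs.trans (hy i)⟩, ⟨hy, hyy⟩, hst, hyt⟩

lemma incrementRpowProd_cons (α : Fin (n + 1) → ℝ) (s : ℝ) (y : Fin n → ℝ) :
    incrementRpowProd α (Fin.cons s y)
      = s ^ α 0 * incrementRpowProd (Fin.tail α) (y - fun _ => s) := by
  rw [incrementRpowProd, incrementRpowProd, Fin.prod_univ_succ]
  congr 1
  · simp
  refine Finset.prod_congr rfl fun j _ => ?_
  simp only [Fin.cons_succ, Fin.val_succ, Nat.add_one_ne_zero, ↓reduceDIte, Pi.sub_apply,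
    Fin.tail, Nat.add_sub_cancel]
  split_ifs with hj
  · rw [show (⟨j, by omega⟩ : Fin (n + 1)) = 0 from Fin.ext hj, Fin.cons_zero, sub_zero]
  · rw [show (⟨j, by omega⟩ : Fin (n + 1)) = Fin.succ ⟨j - 1, by omega⟩ from
      Fin.ext (Nat.sub_add_cancel (Nat.one_le_iff_ne_zero.2 hj)).symm, Fin.cons_succ, sub_sub_sub_cancel_right]

lemma lintegral_orderedSimplex_succ (α : Fin (n + 1) → ℝ) (t : ℝ) :
    ∫⁻ r in orderedSimplex (n + 1) t, ENNReal.ofReal (incrementRpowProd α r)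
      = ∫⁻ s in Ioo 0 t, ENNReal.ofReal (s ^ α 0) *
          ∫⁻ y in orderedSimplex n (t - s), ENNReal.ofReal (incrementRpowProd (Fin.tail α) y) := by
  rw [← lintegral_indicator (measurableSet_orderedSimplex _ _),
    lintegral_fin_cons _ ((measurable_incrementRpowProd α).ennreal_ofReal.indicator
      (measurableSet_orderedSimplex _ _)), ← lintegral_indicator measurableSet_Ioo]
  refine lintegral_congr fun s => ?_
  by_cases hs : s ∈ Ioo 0 t
  · rw [indicator_of_mem hs, ← lintegral_indicator (measurableSet_orderedSimplex _ _),
      ← lintegral_const_mul' _ _ ENNReal.ofReal_ne_top,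
      ← lintegral_sub_right_eq_self (fun y => ENNReal.ofReal (s ^ α 0) *
        (orderedSimplex n (t - s)).indicator _ y) (fun _ => s)]
    refine lintegral_congr fun y => ?_
    by_cases hy : (y - fun _ => s) ∈ orderedSimplex n (t - s)
    · rw [indicator_of_mem (cons_mem_orderedSimplex_iff.2 ⟨hs, hy⟩), indicator_of_mem hy,
        incrementRpowProd_cons, ENNReal.ofReal_mul (rpow_nonneg hs.1.le _)]
    · rw [indicator_of_notMem fun h => hy (cons_mem_orderedSimplex_iff.1 h).2,
        indicator_of_notMem hy, mul_zero]
  · simp [indicator, cons_mem_orderedSimplex_iff, hs]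

theorem lintegral_orderedSimplex (α : Fin n → ℝ) (hα : ∀ i, -1 < α i) {t : ℝ} (ht : 0 < t) :
    ∫⁻ r in orderedSimplex n t, ENNReal.ofReal (incrementRpowProd α r)
      = ENNReal.ofReal ((∏ i, Gamma (α i + 1)) * t ^ (∑ i, α i + n)
          / Gamma (∑ i, α i + n + 1)) := by
  induction n generalizing t with
  | zero => simp [orderedSimplex, incrementRpowProd, volume_pi]
  | succ n ih =>
    have hβ : ∀ i, -1 < Fin.tail α i := fun i => hα i.succ
    set γ := ∑ i, Fin.tail α i + n
    set C := ∏ i, Gamma (Fin.tail α i + 1)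
    have hγ : 0 < γ + 1 := by
      have := sum_add_card_nonneg fun i => (hβ i).le
      rw [Fintype.card_fin] at this
      linarith
    have hCΓ : 0 ≤ C / Gamma (γ + 1) :=
      (div_pos (prod_Gamma_add_one_pos hβ) (Gamma_pos_of_pos hγ)).le
    calc _ = ∫⁻ s in Ioo 0 t, ENNReal.ofReal (C / Gamma (γ + 1)) *
              ENNReal.ofReal (s ^ α 0 * (t - s) ^ γ) := by
          rw [lintegral_orderedSimplex_succ]
          refine setLIntegral_congr_fun measurableSet_Ioo fun s hs => ?_
          rw [ih _ hβ (sub_pos.2 hs.2), ← ENNReal.ofReal_mul (rpow_nonneg hs.1.le _),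
            ← ENNReal.ofReal_mul hCΓ]
          congr 1
          ring
      _ = ENNReal.ofReal (C / Gamma (γ + 1)) *
            ENNReal.ofReal (ProbabilityTheory.beta (α 0 + 1) (γ + 1) * t ^ (α 0 + γ + 1)) := by
          rw [lintegral_const_mul' _ _ ENNReal.ofReal_ne_top,
            lintegral_Ioo_rpow_mul_sub_rpow (hα 0) (by linarith) ht]
      _ = _ := by
          rw [← ENNReal.ofReal_mul hCΓ]
          congr 1
          have hsum : ∑ i, α i + ↑(n + 1) = α 0 + γ + 1 := by
            simp only [γ, Fin.sum_univ_succ, Fin.tail]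
            push_cast
            ring
          have hprod : ∏ i, Gamma (α i + 1) = Gamma (α 0 + 1) * C := Fin.prod_univ_succ _
          rw [hsum, hprod, ProbabilityTheory.beta,
            show α 0 + 1 + (γ + 1) = α 0 + γ + 1 + 1 by ring]
          have := Gamma_pos_of_pos hγ
          field_simp

theorem stmt2_general (n : ℕ) (α : Fin n → ℝ)
    (hα : ∀ i, α i ∈ Set.Ioo (-1 : ℝ) 1) (t : ℝ) (ht : 0 < t) :
    (∫ r in {r : Fin n → ℝ |
        (∀ i, 0 < r i) ∧ (∀ i j : Fin n, i < j → r i < r j) ∧ (∀ i, r i < t)},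
      ∏ i : Fin n,
        (r i - (if h : (i : ℕ) = 0 then 0
          else r ⟨(i : ℕ) - 1, Nat.lt_of_le_of_lt (Nat.sub_le _ _) i.isLt⟩)) ^ (α i))
      = (∏ i : Fin n, Real.Gamma (α i + 1)) * t ^ ((∑ i, α i) + n) /
          Real.Gamma ((∑ i, α i) + n + 1) := by
  have hα' : ∀ i, -1 < α i := fun i => (hα i).1
  have hsum : 0 ≤ ∑ i, α i + n := by
    simpa using sum_add_card_nonneg fun i => (hα' i).le
  change ∫ r in orderedSimplex n t, incrementRpowProd α r = _
  rw [integral_eq_lintegral_of_nonneg_ae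
      (ae_restrict_of_forall_mem (measurableSet_orderedSimplex n t) fun r hr =>
        (incrementRpowProd_pos hr).le)
      (measurable_incrementRpowProd α).aestronglyMeasurable,
    lintegral_orderedSimplex α hα' ht, ENNReal.toReal_ofReal]
  exact div_nonneg (mul_nonneg (prod_Gamma_add_one_pos hα').le (rpow_nonneg ht.le _))
    (Gamma_pos_of_pos (by linarith)).le

theorem stmt2 (n : ℕ) (hn : 0 < n) (α : Fin n → ℝ)
    (hα : ∀ i, α i ∈ Set.Ioo (-1 : ℝ) 1) (t : ℝ) (ht : 0 < t) :
    (∫ r in {r : Fin n → ℝ |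
        (∀ i, 0 < r i) ∧ (∀ i j : Fin n, i < j → r i < r j) ∧ (∀ i, r i < t)},
      ∏ i : Fin n,
        (r i - (if h : (i : ℕ) = 0 then 0
          else r ⟨(i : ℕ) - 1, Nat.lt_of_le_of_lt (Nat.sub_le _ _) i.isLt⟩)) ^ (α i))
      = (∏ i : Fin n, Real.Gamma (α i + 1)) * t ^ ((∑ i, α i) + n) /
          Real.Gamma ((∑ i, α i) + n + 1) :=
  stmt2_general n α hα t ht
end

section
/- Let β₀ ∈ (0,1). For a positive real x and t > 0, sup_{a ∈ ℝ} ∫₀ᵗ s^{-β₀} e^{-|s+a| x} ds ≤ C (1 + t^{1-β₀}) / (1 + x^{1-β₀}) for some constant C depending only on β₀. -/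
/-!
Write `γ = 1 - β₀`. Bounding the exponential by `1` gives the integral at most `t ^ γ / γ`.
Splitting at `s = 1 / x`, the power integrates to `x ^ (-γ) / γ` over `(0, 1 / x]`, while beyond
`1 / x` it is at most `x ^ β₀` and the shifted exponential integrates to at most `2 / x` over all of
`ℝ`; this gives the bound `(1 / γ + 2) x ^ (-γ)`, uniformly in the shift `a`. Adding the first
bound to `x ^ γ` times the second gives the claim.
-/

open MeasureTheory Real Set

lemma integrableOn_Ioc_rpow_neg {β : ℝ} (hβ : β < 1) (r : ℝ) :
    IntegrableOn (fun s : ℝ => s ^ (-β)) (Ioc 0 r) :=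
  (intervalIntegral.intervalIntegrable_rpow' (by linarith)).1

lemma integral_Ioc_rpow_neg {β r : ℝ} (hβ : β < 1) (hr : 0 ≤ r) :
    ∫ s in Ioc 0 r, s ^ (-β) = r ^ (1 - β) / (1 - β) := by
  rw [← intervalIntegral.integral_of_le hr, integral_rpow (Or.inl (by linarith)),
    zero_rpow (by linarith), neg_add_eq_sub, sub_zero]

lemma integral_exp_neg_abs_mul {x : ℝ} (hx : 0 < x) :
    ∫ u, exp (-(|u| * x)) = 2 / x := by
  rw [integral_comp_abs (f := fun u => exp (-(u * x)))]
  simp_rw [neg_mul_eq_mul_neg, mul_comm _ (-x)]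
  rw [integral_exp_mul_Ioi (neg_neg_of_pos hx), mul_zero, exp_zero]
  field_simp

lemma integrable_exp_neg_abs_mul {x : ℝ} (hx : 0 < x) :
    Integrable fun u => exp (-(|u| * x)) :=
  .of_integral_ne_zero (by rw [integral_exp_neg_abs_mul hx]; positivity)

lemma setIntegral_exp_neg_abs_add_mul_le (S : Set ℝ) (a : ℝ) {x : ℝ} (hx : 0 < x) :
    ∫ s in S, exp (-(|s + a| * x)) ≤ 2 / x := by
  calc ∫ s in S, exp (-(|s + a| * x))
      ≤ ∫ s, exp (-(|s + a| * x)) :=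
        setIntegral_le_integral ((integrable_exp_neg_abs_mul hx).comp_add_right a)
          (.of_forall fun _ => (exp_pos _).le)
    _ = 2 / x := by
        rw [integral_add_right_eq_self (fun u => exp (-(|u| * x))), integral_exp_neg_abs_mul hx]

section

variable {β x t : ℝ} (a : ℝ)

lemma setIntegral_Ioc_rpow_neg_mul_exp_le_rpow (hβ : β < 1) (hx : 0 ≤ x) (ht : 0 ≤ t) :
    ∫ s in Ioc 0 t, s ^ (-β) * exp (-(|s + a| * x)) ≤ t ^ (1 - β) / (1 - β) := by
  rw [← integral_Ioc_rpow_neg hβ ht]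
  refine integral_mono_of_nonneg ?_ (integrableOn_Ioc_rpow_neg hβ t) ?_
  · filter_upwards [ae_restrict_mem measurableSet_Ioc] with s hs
    exact mul_nonneg (rpow_nonneg hs.1.le _) (exp_pos _).le
  · filter_upwards [ae_restrict_mem measurableSet_Ioc] with s hs
    refine mul_le_of_le_one_right (rpow_nonneg hs.1.le _) (exp_le_one_iff.2 ?_)
    exact neg_nonpos.2 (by positivity)

lemma rpow_neg_mul_exp_le_indicator_add (hβ : 0 ≤ β) (hx : 0 < x) {s : ℝ} (hs : 0 < s) :
    s ^ (-β) * exp (-(|s + a| * x)) ≤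
      (Ioc 0 x⁻¹).indicator (fun s => s ^ (-β)) s + x ^ β * exp (-(|s + a| * x)) := by
  have hexp_pos := exp_pos (-(|s + a| * x))
  by_cases hsx : s ≤ x⁻¹
  · rw [indicator_of_mem (show s ∈ Ioc 0 x⁻¹ from ⟨hs, hsx⟩)]
    have hexp_le : exp (-(|s + a| * x)) ≤ 1 := exp_le_one_iff.2 (neg_nonpos.2 (by positivity))
    nlinarith [rpow_nonneg hs.le (-β), rpow_nonneg hx.le β]
  · rw [indicator_of_notMem fun h => hsx h.2, zero_add]
    refine mul_le_mul_of_nonneg_right ?_ hexp_pos.le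
    calc s ^ (-β) ≤ x⁻¹ ^ (-β) :=
          rpow_le_rpow_of_nonpos (by positivity) (not_le.1 hsx).le (neg_nonpos.2 hβ)
      _ = x ^ β := by rw [inv_rpow hx.le, ← rpow_neg hx.le, neg_neg]

lemma setIntegral_Ioc_rpow_neg_mul_exp_le_rpow_neg (hβ : β ∈ Ico 0 1) (hx : 0 < x) :
    ∫ s in Ioc 0 t, s ^ (-β) * exp (-(|s + a| * x)) ≤ (1 / (1 - β) + 2) * x ^ (β - 1) := by
  have hind : Integrable ((Ioc 0 x⁻¹).indicator fun s : ℝ => s ^ (-β)) :=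
    (integrable_indicator_iff measurableSet_Ioc).2 (integrableOn_Ioc_rpow_neg hβ.2 _)
  have hexp : Integrable fun s => exp (-(|s + a| * x)) :=
    (integrable_exp_neg_abs_mul hx).comp_add_right a
  have hind_le : ∫ s in Ioc 0 t, (Ioc 0 x⁻¹).indicator (fun s => s ^ (-β)) s ≤
      x⁻¹ ^ (1 - β) / (1 - β) := by
    calc _ ≤ ∫ s, (Ioc 0 x⁻¹).indicator (fun s => s ^ (-β)) s :=
          setIntegral_le_integral hind (.of_forall <|
            indicator_nonneg fun s hs => rpow_nonneg hs.1.le _)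
      _ = x⁻¹ ^ (1 - β) / (1 - β) := by
          rw [integral_indicator measurableSet_Ioc,
            integral_Ioc_rpow_neg hβ.2 (inv_nonneg.2 hx.le)]
  calc ∫ s in Ioc 0 t, s ^ (-β) * exp (-(|s + a| * x))
      ≤ ∫ s in Ioc 0 t, ((Ioc 0 x⁻¹).indicator (fun s => s ^ (-β)) s +
          x ^ β * exp (-(|s + a| * x))) := by
        refine integral_mono_of_nonneg ?_ (hind.add (hexp.const_mul _)).integrableOn ?_
        · filter_upwards [ae_restrict_mem measurableSet_Ioc] with s hs
          exact mul_nonneg (rpow_nonneg hs.1.le _) (exp_pos _).le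
        · filter_upwards [ae_restrict_mem measurableSet_Ioc] with s hs
          exact rpow_neg_mul_exp_le_indicator_add a hβ.1 hx hs.1
    _ ≤ x⁻¹ ^ (1 - β) / (1 - β) + x ^ β * (2 / x) := by
        rw [integral_add hind.integrableOn (hexp.const_mul _).integrableOn, integral_const_mul]
        exact add_le_add hind_le (mul_le_mul_of_nonneg_left
          (setIntegral_exp_neg_abs_add_mul_le _ a hx) (rpow_nonneg hx.le _))
    _ = (1 / (1 - β) + 2) * x ^ (β - 1) := by
        rw [inv_rpow hx.le, ← rpow_neg hx.le, neg_sub, rpow_sub hx, rpow_one]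
        ring

end

theorem stmt11 (β₀ : ℝ) (hβ : β₀ ∈ Set.Ioo (0:ℝ) 1) :
    ∃ C > (0:ℝ), ∀ x > (0:ℝ), ∀ t > (0:ℝ), ∀ a : ℝ,
      (∫ s in Set.Ioc (0:ℝ) t, s ^ (-β₀) * Real.exp (-(|s + a| * x)))
        ≤ C * (1 + t ^ (1 - β₀)) / (1 + x ^ (1 - β₀)) := by
  obtain ⟨hβ0, hβ1⟩ := hβ
  refine ⟨1 / (1 - β₀) + 2, by positivity, fun x hx t ht a => ?_⟩
  set I := ∫ s in Ioc 0 t, s ^ (-β₀) * exp (-(|s + a| * x))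
  have hbound_t : I ≤ t ^ (1 - β₀) / (1 - β₀) :=
    setIntegral_Ioc_rpow_neg_mul_exp_le_rpow a hβ1 hx.le ht.le
  have hbound_x : I ≤ (1 / (1 - β₀) + 2) * x ^ (β₀ - 1) :=
    setIntegral_Ioc_rpow_neg_mul_exp_le_rpow_neg a ⟨hβ0.le, hβ1⟩ hx
  have ht_rpow : 0 ≤ t ^ (1 - β₀) := rpow_nonneg ht.le _
  rw [le_div_iff₀ (by positivity)]
  calc I * (1 + x ^ (1 - β₀)) = I + I * x ^ (1 - β₀) := by ring
    _ ≤ t ^ (1 - β₀) / (1 - β₀) + (1 / (1 - β₀) + 2) * (x ^ (β₀ - 1) * x ^ (1 - β₀)) := by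
        rw [← mul_assoc]; gcongr
    _ ≤ (1 / (1 - β₀) + 2) * (1 + t ^ (1 - β₀)) := by
        rw [← rpow_add hx, show β₀ - 1 + (1 - β₀) = 0 by ring, rpow_zero, div_eq_mul_one_div]
        nlinarith
end

section
/- Let β₀ ∈ (0,1) and g_δ(t) = δ^{-1} 1_{[0,δ]}(t). There exists a constant C > 0 depending only on β₀ such that for all δ₁, δ₂ > 0, all t > 0, and all s₁, s₂ ∈ [0,t] with s₁ ≠ s₂: ∫₀ᵗ∫₀ᵗ g_{δ₁}(t - s₁ - r₁) g_{δ₂}(t - s₂ - r₂) |r₁ - r₂|^{-β₀} dr₁ dr₂ ≤ C |s₁ - s₂|^{-β₀}. -/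
/-!
Write `box δ c` for the density `r ↦ g_δ(c - r)`, of mass one on `[c - δ, c]`, and
`d = |c₁ - c₂|` for the distance of the centres `cᵢ = t - sᵢ`. By Fubini we may integrate
first against the wider box, say `δ₁ ≤ δ₂`. Since `|x|^{-β} ≤ 1_{|x| ≤ δ} |x|^{-β} + δ^{-β}`,
averaging the kernel over a box of width `δ` costs at most `(2 / (1 - β) + 1) δ^{-β}`; this
settles the case `d ≤ 2 δ₂`. If `d ≥ 2 δ₂`, the two supports are at distance at least
`d - δ₂ ≥ d / 2`, so the kernel is at most `(d / 2)^{-β}` there, and both boxes have mass at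
most one.
-/

open MeasureTheory Real Set

/-- The paper's `g_δ (c - r)`. -/
noncomputable def box (δ c : ℝ) : ℝ → ℝ := (Icc (c - δ) c).indicator fun _ => δ⁻¹

lemma inv_mul_indicator_eq_box (δ c r : ℝ) :
    δ⁻¹ * (Icc 0 δ).indicator (fun _ => (1 : ℝ)) (c - r) = box δ c r := by
  have : c - r ∈ Icc 0 δ ↔ r ∈ Icc (c - δ) c := by
    simp only [mem_Icc]; constructor <;> intro h <;> constructor <;> linarith [h.1, h.2]
  by_cases hr : r ∈ Icc (c - δ) c
  · simp [box, hr, this.2 hr]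
  · simp [box, hr, mt this.1 hr]

lemma box_nonneg {δ : ℝ} (hδ : 0 ≤ δ) (c r : ℝ) : 0 ≤ box δ c r :=
  indicator_nonneg (fun _ _ => inv_nonneg.2 hδ) r

lemma box_le {δ : ℝ} (hδ : 0 ≤ δ) (c r : ℝ) : box δ c r ≤ δ⁻¹ :=
  indicator_le_self' (fun _ _ => inv_nonneg.2 hδ) r

lemma mem_Icc_of_box_ne_zero {δ c r : ℝ} (h : box δ c r ≠ 0) : r ∈ Icc (c - δ) c :=
  mem_of_indicator_ne_zero h

lemma measurable_box (δ c : ℝ) : Measurable (box δ c) :=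
  measurable_const.indicator measurableSet_Icc

lemma integrable_box (δ c : ℝ) : Integrable (box δ c) :=
  (integrableOn_const measure_Icc_lt_top.ne).integrable_indicator measurableSet_Icc

lemma integral_box {δ : ℝ} (hδ : 0 < δ) (c : ℝ) : ∫ r, box δ c r = 1 := by
  rw [box, integral_indicator_const _ measurableSet_Icc, measureReal_def, Real.volume_Icc,
    sub_sub_cancel, ENNReal.toReal_ofReal hδ.le, smul_eq_mul, mul_inv_cancel₀ hδ.ne']

lemma setIntegral_box_le_one {δ : ℝ} (hδ : 0 < δ) (c : ℝ) (s : Set ℝ) :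
    ∫ r in s, box δ c r ≤ 1 :=
  (setIntegral_le_integral (integrable_box δ c) (.of_forall (box_nonneg hδ.le c))).trans
    (integral_box hδ c).le

lemma integral_indicator_abs_rpow_neg {β δ : ℝ} (hβ : β < 1) (hδ : 0 ≤ δ) :
    ∫ x, (Icc (-δ) δ).indicator (fun x => |x| ^ (-β)) x = 2 * (δ ^ (1 - β) / (1 - β)) := by
  have hcomp : (Icc (-δ) δ).indicator (fun x => |x| ^ (-β))
      = fun x => (Iic δ).indicator (fun u => u ^ (-β)) |x| := by
    ext x
    have : x ∈ Icc (-δ) δ ↔ |x| ∈ Iic δ := by rw [mem_Iic, abs_le, mem_Icc]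
    by_cases hx : x ∈ Icc (-δ) δ
    · simp [hx, this.1 hx]
    · simp [hx, mt this.2 hx]
  rw [hcomp, integral_comp_abs, integral_indicator measurableSet_Iic,
    Measure.restrict_restrict measurableSet_Iic, Iic_inter_Ioi,
    ← intervalIntegral.integral_of_le hδ, integral_rpow (Or.inl (by linarith)),
    zero_rpow (by linarith), sub_zero, neg_add_eq_sub]

lemma integrable_indicator_abs_rpow_neg {β δ : ℝ} (hβ : β < 1) (hδ : 0 < δ) :
    Integrable ((Icc (-δ) δ).indicator fun x => |x| ^ (-β)) :=
  Integrable.of_integral_ne_zero <| by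
    rw [integral_indicator_abs_rpow_neg hβ hδ.le]
    have : 0 < 1 - β := by linarith
    positivity

lemma abs_rpow_neg_le_indicator_add {β δ : ℝ} (hβ : 0 ≤ β) (hδ : 0 < δ) (x : ℝ) :
    |x| ^ (-β) ≤ (Icc (-δ) δ).indicator (fun x => |x| ^ (-β)) x + δ ^ (-β) := by
  by_cases hx : x ∈ Icc (-δ) δ
  · rw [indicator_of_mem hx]
    exact le_add_of_nonneg_right (by positivity)
  · rw [indicator_of_notMem hx, zero_add]
    have : δ ≤ |x| := (not_le.1 fun h => hx (abs_le.1 h)).le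
    exact rpow_le_rpow_of_nonpos hδ this (by linarith)

lemma box_mul_abs_rpow_neg_le {β δ : ℝ} (hβ : 0 ≤ β) (hδ : 0 < δ) (c y r : ℝ) :
    box δ c r * |y - r| ^ (-β) ≤
      δ⁻¹ * (Icc (-δ) δ).indicator (fun x => |x| ^ (-β)) (y - r) + δ ^ (-β) * box δ c r :=
  calc box δ c r * |y - r| ^ (-β)
      ≤ box δ c r * ((Icc (-δ) δ).indicator (fun x => |x| ^ (-β)) (y - r) + δ ^ (-β)) :=
        mul_le_mul_of_nonneg_left (abs_rpow_neg_le_indicator_add hβ hδ _) (box_nonneg hδ.le c r)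
    _ ≤ δ⁻¹ * (Icc (-δ) δ).indicator (fun x => |x| ^ (-β)) (y - r) + δ ^ (-β) * box δ c r := by
        rw [mul_add, mul_comm (box δ c r) (δ ^ (-β))]
        gcongr
        · exact indicator_nonneg (fun _ _ => by positivity) _
        · exact box_le hδ.le c r

lemma integrable_box_mul_abs_rpow_neg {β δ : ℝ} (hβ₀ : 0 ≤ β) (hβ₁ : β < 1) (hδ : 0 < δ)
    (c y : ℝ) : Integrable fun r => box δ c r * |y - r| ^ (-β) :=
  Integrable.mono' ((((integrable_indicator_abs_rpow_neg hβ₁ hδ).comp_sub_left y).const_mul _).add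
      ((integrable_box δ c).const_mul _))
    (((measurable_box δ c).mul
      ((measurable_const.sub measurable_id).abs.pow_const _)).aestronglyMeasurable)
    (.of_forall fun r => by
      rw [Real.norm_of_nonneg (mul_nonneg (box_nonneg hδ.le c r) (by positivity))]
      exact box_mul_abs_rpow_neg_le hβ₀ hδ c y r)

lemma setIntegral_box_mul_abs_rpow_neg_le {β δ : ℝ} (hβ₀ : 0 ≤ β) (hβ₁ : β < 1) (hδ : 0 < δ)
    (c y : ℝ) (s : Set ℝ) :
    ∫ r in s, box δ c r * |y - r| ^ (-β) ≤ (2 / (1 - β) + 1) * δ ^ (-β) := by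
  have hind := ((integrable_indicator_abs_rpow_neg hβ₁ hδ).comp_sub_left y).const_mul δ⁻¹
  have hbox := (integrable_box δ c).const_mul (δ ^ (-β))
  have hmaj := hind.add hbox
  calc ∫ r in s, box δ c r * |y - r| ^ (-β)
      ≤ ∫ r, δ⁻¹ * (Icc (-δ) δ).indicator (fun x => |x| ^ (-β)) (y - r) + δ ^ (-β) * box δ c r :=
        (setIntegral_mono (integrable_box_mul_abs_rpow_neg hβ₀ hβ₁ hδ c y).integrableOn
          hmaj.integrableOn (box_mul_abs_rpow_neg_le hβ₀ hδ c y)).trans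
        (setIntegral_le_integral hmaj (.of_forall fun r =>
          add_nonneg
            (mul_nonneg (inv_nonneg.2 hδ.le) (indicator_nonneg (fun _ _ => by positivity) _))
            (mul_nonneg (by positivity) (box_nonneg hδ.le c r))))
    _ = (2 / (1 - β) + 1) * δ ^ (-β) := by
        rw [integral_add hind hbox, integral_const_mul, integral_const_mul,
          integral_sub_left_eq_self, integral_indicator_abs_rpow_neg hβ₁ hδ.le, integral_box hδ,
          sub_eq_add_neg 1 β, rpow_add hδ, rpow_one, ← sub_eq_add_neg]
        field_simp

lemma abs_sub_sub_le_abs_sub {δ₁ δ₂ c₁ c₂ r₁ r₂ : ℝ} (h₁₂ : δ₁ ≤ δ₂)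
    (hr₁ : r₁ ∈ Icc (c₁ - δ₁) c₁) (hr₂ : r₂ ∈ Icc (c₂ - δ₂) c₂) :
    |c₁ - c₂| - δ₂ ≤ |r₁ - r₂| := by
  obtain ⟨hr₁l, hr₁u⟩ := hr₁
  obtain ⟨hr₂l, hr₂u⟩ := hr₂
  rcases le_total c₂ c₁ with h | h
  · rw [abs_of_nonneg (sub_nonneg.2 h)]
    linarith [le_abs_self (r₁ - r₂)]
  · rw [abs_of_nonpos (sub_nonpos.2 h)]
    linarith [neg_abs_le (r₁ - r₂)]

lemma setIntegral_box_mul_abs_rpow_neg_le_of_mem {β δ₁ δ₂ c₁ c₂ r : ℝ} (hβ₀ : 0 ≤ β)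
    (hβ₁ : β < 1) (hδ₂ : 0 < δ₂) (h₁₂ : δ₁ ≤ δ₂) (hc : c₁ ≠ c₂) (hr : r ∈ Icc (c₁ - δ₁) c₁)
    (s : Set ℝ) :
    ∫ r₂ in s, box δ₂ c₂ r₂ * |r - r₂| ^ (-β) ≤ (2 / (1 - β) + 1) * (|c₁ - c₂| / 2) ^ (-β) := by
  have hd : 0 < |c₁ - c₂| / 2 := half_pos (abs_pos.2 (sub_ne_zero.2 hc))
  have hK : 1 ≤ 2 / (1 - β) + 1 := le_add_of_nonneg_left (div_nonneg zero_le_two (by linarith))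
  rcases le_total (|c₁ - c₂| / 2) δ₂ with hnear | hfar
  · calc ∫ r₂ in s, box δ₂ c₂ r₂ * |r - r₂| ^ (-β)
        ≤ (2 / (1 - β) + 1) * δ₂ ^ (-β) := setIntegral_box_mul_abs_rpow_neg_le hβ₀ hβ₁ hδ₂ c₂ r s
      _ ≤ (2 / (1 - β) + 1) * (|c₁ - c₂| / 2) ^ (-β) :=
        mul_le_mul_of_nonneg_left (rpow_le_rpow_of_nonpos hd hnear (by linarith)) (by linarith)
  · have hpt : ∀ r₂, box δ₂ c₂ r₂ * |r - r₂| ^ (-β) ≤ (|c₁ - c₂| / 2) ^ (-β) * box δ₂ c₂ r₂ := by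
      intro r₂
      by_cases h0 : box δ₂ c₂ r₂ = 0
      · simp [h0]
      rw [mul_comm]
      refine mul_le_mul_of_nonneg_right (rpow_le_rpow_of_nonpos hd ?_ (by linarith))
        (box_nonneg hδ₂.le c₂ r₂)
      linarith [abs_sub_sub_le_abs_sub h₁₂ hr (mem_Icc_of_box_ne_zero h0)]
    calc ∫ r₂ in s, box δ₂ c₂ r₂ * |r - r₂| ^ (-β)
        ≤ ∫ r₂ in s, (|c₁ - c₂| / 2) ^ (-β) * box δ₂ c₂ r₂ :=
          setIntegral_mono (integrable_box_mul_abs_rpow_neg hβ₀ hβ₁ hδ₂ c₂ r).integrableOn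
            ((integrable_box δ₂ c₂).const_mul _).integrableOn hpt
      _ = (|c₁ - c₂| / 2) ^ (-β) * ∫ r₂ in s, box δ₂ c₂ r₂ := integral_const_mul _ _
      _ ≤ (|c₁ - c₂| / 2) ^ (-β) :=
          mul_le_of_le_one_right (by positivity) (setIntegral_box_le_one hδ₂ c₂ s)
      _ ≤ (2 / (1 - β) + 1) * (|c₁ - c₂| / 2) ^ (-β) := le_mul_of_one_le_left (by positivity) hK

lemma integral_box_mul_box_mul_abs_rpow_neg_le_of_le {β δ₁ δ₂ c₁ c₂ : ℝ} (hβ₀ : 0 ≤ β)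
    (hβ₁ : β < 1) (hδ₁ : 0 < δ₁) (hδ₂ : 0 < δ₂) (h₁₂ : δ₁ ≤ δ₂) (hc : c₁ ≠ c₂) (s s' : Set ℝ) :
    ∫ r₁ in s, ∫ r₂ in s', box δ₁ c₁ r₁ * (box δ₂ c₂ r₂ * |r₁ - r₂| ^ (-β))
      ≤ (2 / (1 - β) + 1) * (|c₁ - c₂| / 2) ^ (-β) := by
  set M := (2 / (1 - β) + 1) * (|c₁ - c₂| / 2) ^ (-β)
  have hpt : ∀ r₁, box δ₁ c₁ r₁ * ∫ r₂ in s', box δ₂ c₂ r₂ * |r₁ - r₂| ^ (-β)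
      ≤ box δ₁ c₁ r₁ * M := by
    intro r₁
    by_cases h0 : box δ₁ c₁ r₁ = 0
    · simp [h0]
    exact mul_le_mul_of_nonneg_left (setIntegral_box_mul_abs_rpow_neg_le_of_mem hβ₀ hβ₁ hδ₂ h₁₂
      hc (mem_Icc_of_box_ne_zero h0) s') (box_nonneg hδ₁.le c₁ r₁)
  have hM : 0 ≤ M := by
    have : 0 < 1 - β := by linarith
    positivity
  simp_rw [integral_const_mul]
  calc ∫ r₁ in s, box δ₁ c₁ r₁ * ∫ r₂ in s', box δ₂ c₂ r₂ * |r₁ - r₂| ^ (-β)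
      ≤ ∫ r₁ in s, box δ₁ c₁ r₁ * M :=
        integral_mono_of_nonneg (.of_forall fun r₁ => mul_nonneg (box_nonneg hδ₁.le c₁ r₁)
            (integral_nonneg fun r₂ => mul_nonneg (box_nonneg hδ₂.le c₂ r₂) (by positivity)))
          ((integrable_box δ₁ c₁).mul_const M).integrableOn (.of_forall hpt)
    _ = (∫ r₁ in s, box δ₁ c₁ r₁) * M := integral_mul_const M _
    _ ≤ M := mul_le_of_le_one_left hM (setIntegral_box_le_one hδ₁ c₁ s)

lemma integrable_box_mul_box_mul_abs_rpow_neg {β δ₁ δ₂ : ℝ} (hβ₀ : 0 ≤ β) (hβ₁ : β < 1)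
    (hδ₁ : 0 < δ₁) (hδ₂ : 0 < δ₂) (c₁ c₂ : ℝ) (s s' : Set ℝ) :
    Integrable (fun p : ℝ × ℝ => box δ₁ c₁ p.1 * (box δ₂ c₂ p.2 * |p.1 - p.2| ^ (-β)))
      ((volume.restrict s).prod (volume.restrict s')) := by
  have hmeas : Measurable fun p : ℝ × ℝ =>
      box δ₁ c₁ p.1 * (box δ₂ c₂ p.2 * |p.1 - p.2| ^ (-β)) :=
    ((measurable_box δ₁ c₁).comp measurable_fst).mul
      (((measurable_box δ₂ c₂).comp measurable_snd).mul
        ((measurable_fst.sub measurable_snd).abs.pow_const _))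
  rw [integrable_prod_iff hmeas.aestronglyMeasurable]
  refine ⟨.of_forall fun r₁ =>
    ((integrable_box_mul_abs_rpow_neg hβ₀ hβ₁ hδ₂ c₂ r₁).integrableOn).const_mul (box δ₁ c₁ r₁), ?_⟩
  refine Integrable.mono' (((integrable_box δ₁ c₁).mul_const
      ((2 / (1 - β) + 1) * δ₂ ^ (-β))).integrableOn)
    hmeas.aestronglyMeasurable.norm.integral_prod_right' (.of_forall fun r₁ => ?_)
  have hnn : ∀ r₂, 0 ≤ box δ₂ c₂ r₂ * |r₁ - r₂| ^ (-β) := fun r₂ =>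
    mul_nonneg (box_nonneg hδ₂.le c₂ r₂) (by positivity)
  have hnorm : ∀ r₂, ‖box δ₁ c₁ r₁ * (box δ₂ c₂ r₂ * |r₁ - r₂| ^ (-β))‖
      = box δ₁ c₁ r₁ * (box δ₂ c₂ r₂ * |r₁ - r₂| ^ (-β)) := fun r₂ =>
    Real.norm_of_nonneg (mul_nonneg (box_nonneg hδ₁.le c₁ r₁) (hnn r₂))
  simp_rw [hnorm, integral_const_mul]
  rw [Real.norm_of_nonneg (mul_nonneg (box_nonneg hδ₁.le c₁ r₁) (integral_nonneg hnn))]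
  exact mul_le_mul_of_nonneg_left (setIntegral_box_mul_abs_rpow_neg_le hβ₀ hβ₁ hδ₂ c₂ r₁ s')
    (box_nonneg hδ₁.le c₁ r₁)

lemma integral_box_mul_box_mul_abs_rpow_neg_le {β δ₁ δ₂ c₁ c₂ : ℝ} (hβ₀ : 0 ≤ β)
    (hβ₁ : β < 1) (hδ₁ : 0 < δ₁) (hδ₂ : 0 < δ₂) (hc : c₁ ≠ c₂) (s s' : Set ℝ) :
    ∫ r₁ in s, ∫ r₂ in s', box δ₁ c₁ r₁ * (box δ₂ c₂ r₂ * |r₁ - r₂| ^ (-β))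
      ≤ (2 / (1 - β) + 1) * (|c₁ - c₂| / 2) ^ (-β) := by
  rcases le_total δ₁ δ₂ with h₁₂ | h₂₁
  · exact integral_box_mul_box_mul_abs_rpow_neg_le_of_le hβ₀ hβ₁ hδ₁ hδ₂ h₁₂ hc s s'
  rw [integral_integral_swap (integrable_box_mul_box_mul_abs_rpow_neg hβ₀ hβ₁ hδ₁ hδ₂ c₁ c₂ s s'),
    abs_sub_comm c₁ c₂]
  convert integral_box_mul_box_mul_abs_rpow_neg_le_of_le hβ₀ hβ₁ hδ₂ hδ₁ h₂₁ hc.symm s' s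
    using 3 with r₂
  congr 1
  ext r₁
  rw [abs_sub_comm r₁ r₂]
  ring

theorem stmt18 (β₀ : ℝ) (hβ : β₀ ∈ Set.Ioo (0:ℝ) 1) :
    ∃ C > (0:ℝ), ∀ δ₁ δ₂ : ℝ, 0 < δ₁ → 0 < δ₂ → ∀ t > (0:ℝ),
      ∀ s₁ ∈ Set.Icc (0:ℝ) t, ∀ s₂ ∈ Set.Icc (0:ℝ) t, s₁ ≠ s₂ →
      (∫ r₁ in Set.Ioc (0:ℝ) t, ∫ r₂ in Set.Ioc (0:ℝ) t,
          (δ₁⁻¹ * Set.indicator (Set.Icc (0:ℝ) δ₁) (fun _ => (1:ℝ)) (t - s₁ - r₁)) *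
          (δ₂⁻¹ * Set.indicator (Set.Icc (0:ℝ) δ₂) (fun _ => (1:ℝ)) (t - s₂ - r₂)) *
          |r₁ - r₂| ^ (-β₀))
        ≤ C * |s₁ - s₂| ^ (-β₀) := by
  obtain ⟨hβ₀, hβ₁⟩ := hβ
  have h1β : 0 < 1 - β₀ := by linarith
  refine ⟨(2 / (1 - β₀) + 1) * 2 ^ β₀, by positivity, ?_⟩
  intro δ₁ δ₂ hδ₁ hδ₂ t _ s₁ _ s₂ _ hs
  have hc : t - s₁ ≠ t - s₂ := fun h => hs (by linarith)
  calc _ = ∫ r₁ in Ioc 0 t, ∫ r₂ in Ioc 0 t,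
          box δ₁ (t - s₁) r₁ * (box δ₂ (t - s₂) r₂ * |r₁ - r₂| ^ (-β₀)) := by
        simp_rw [inv_mul_indicator_eq_box, mul_assoc]
    _ ≤ (2 / (1 - β₀) + 1) * (|(t - s₁) - (t - s₂)| / 2) ^ (-β₀) :=
        integral_box_mul_box_mul_abs_rpow_neg_le hβ₀.le hβ₁ hδ₁ hδ₂ hc _ _
    _ = (2 / (1 - β₀) + 1) * 2 ^ β₀ * |s₁ - s₂| ^ (-β₀) := by
        rw [sub_sub_sub_cancel_left, abs_sub_comm, div_rpow (abs_nonneg _) zero_le_two,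
          rpow_neg zero_le_two, div_inv_eq_mul, mul_assoc, mul_comm (|s₁ - s₂| ^ (-β₀))]
end
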